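/- In the exterior algebra of ℝ⁷ with standard dual basis e¹,…,e⁷, let φ = e¹²⁷ + e³⁴⁷ + e⁵⁶⁷ + e¹³⁵ − e¹⁴⁶ − e²³⁶ − e²⁴⁵ and let α = a e¹² + b e³⁴ + c e⁵⁶ for reals a,b,c. If dφ is computed from de⁷ = α and deⁱ = 0 for i ≤ 6, then dφ = (a+b)e¹²³⁴ + (a+c)e¹²⁵⁶ + (b+c)e³⁴⁵⁶, and consequently φ ∧ dφ = 2(a+b+c) e¹²³⁴⁵⁶⁷. -/
import Mathlib


/-- The standard dual basis covectors of ℝ⁷ inside its exterior algebra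
(indices shifted: `e i` corresponds to `e^{i+1}` in the paper). -/
noncomputable def e7 (i : Fin 7) : ExteriorAlgebra ℝ (Fin 7 → ℝ) :=
  ExteriorAlgebra.ι ℝ (Pi.single i 1)

/-- The G₂ 3-form φ = e¹²⁷+e³⁴⁷+e⁵⁶⁷+e¹³⁵−e¹⁴⁶−e²³⁶−e²⁴⁵. -/
noncomputable def phiG2 : ExteriorAlgebra ℝ (Fin 7 → ℝ) :=
  e7 0 * e7 1 * e7 6 + e7 2 * e7 3 * e7 6 + e7 4 * e7 5 * e7 6
    + e7 0 * e7 2 * e7 4 - e7 0 * e7 3 * e7 5 - e7 1 * e7 2 * e7 5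
    - e7 1 * e7 3 * e7 4

/-- dφ for the structure equations de⁷ = α = a e¹² + b e³⁴ + c e⁵⁶, deⁱ = 0
for i ≤ 6: the antiderivation replaces e⁷ by α in φ, giving
(e¹²+e³⁴+e⁵⁶) ∧ α. -/
noncomputable def dphiG2 (a b c : ℝ) : ExteriorAlgebra ℝ (Fin 7 → ℝ) :=
  (e7 0 * e7 1 + e7 2 * e7 3 + e7 4 * e7 5) *
    (a • (e7 0 * e7 1) + b • (e7 2 * e7 3) + c • (e7 4 * e7 5))

lemma e7_sq (i : Fin 7) : e7 i * e7 i = 0 := ExteriorAlgebra.ι_sq_zero _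
lemma e7_swap (i j : Fin 7) (_h : j < i) : e7 i * e7 j = -(e7 j * e7 i) :=
  eq_neg_of_add_eq_zero_left (ExteriorAlgebra.ι_add_mul_swap _ _)
lemma e7_sq' (i : Fin 7) (x : ExteriorAlgebra ℝ (Fin 7 → ℝ)) : e7 i * (e7 i * x) = 0 := by
  rw [← mul_assoc, e7_sq, zero_mul]
lemma e7_swap' (i j : Fin 7) (h : j < i) (x : ExteriorAlgebra ℝ (Fin 7 → ℝ)) :
    e7 i * (e7 j * x) = -(e7 j * (e7 i * x)) := by
  rw [← mul_assoc, e7_swap i j h, ← mul_assoc, neg_mul]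

theorem stmt17 (a b c : ℝ) :
    dphiG2 a b c
      = (a+b) • (e7 0 * e7 1 * e7 2 * e7 3)
        + (a+c) • (e7 0 * e7 1 * e7 4 * e7 5)
        + (b+c) • (e7 2 * e7 3 * e7 4 * e7 5)
    ∧ phiG2 * dphiG2 a b c
      = (2*(a+b+c)) • (e7 0 * e7 1 * e7 2 * e7 3 * e7 4 * e7 5 * e7 6) := by
  have h1 : dphiG2 a b c
      = (a+b) • (e7 0 * e7 1 * e7 2 * e7 3)
        + (a+c) • (e7 0 * e7 1 * e7 4 * e7 5)
        + (b+c) • (e7 2 * e7 3 * e7 4 * e7 5) := by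
    unfold dphiG2
    simp only [mul_add, add_mul, mul_smul_comm, smul_mul_assoc, mul_assoc]
    simp (config := { decide := true }) only [e7_sq', e7_swap', e7_sq, e7_swap,
      mul_neg, neg_neg, smul_neg, mul_zero, smul_zero, neg_zero, add_zero, zero_add]
    module
  refine ⟨h1, ?_⟩
  rw [h1]
  unfold phiG2
  simp only [mul_add, add_mul, sub_mul, mul_sub, mul_smul_comm, smul_mul_assoc, mul_assoc]
  simp (config := { decide := true }) only [e7_sq', e7_swap', e7_sq, e7_swap,
    mul_neg, neg_neg, smul_neg, mul_zero, smul_zero, neg_zero, add_zero, zero_add,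
    sub_zero, zero_sub]
  module
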